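/- arXiv:math/0209191 — 2 statements merged into one kernel-verified Lean document; each statement's English description precedes it below -/
import Mathlib

section
/- In any group, if elements a and b satisfy a b a⁻¹ = b² and b a^r b⁻¹ = a^s for natural numbers r ≠ s, then b has finite order. -/
/-!
Conjugation by `a` raises `b` to the square, so conjugation by `aⁿ` raises it to the power `2ⁿ`.
Conjugating `b` by both sides of `b aʳ b⁻¹ = aˢ` then gives `b ^ 2 ^ r = b ^ 2 ^ s`
(conjugation by `b` fixes powers of `b`), and `2 ^ r ≠ 2 ^ s`.
-/

section

variable {G : Type*} [Group G]

theorem pow_mul_mul_inv_pow_of_mul_mul_inv_eq_pow {a b : G} {k : ℕ}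
    (h : a * b * a⁻¹ = b ^ k) (n : ℕ) : a ^ n * b * (a ^ n)⁻¹ = b ^ k ^ n := by
  induction n with
  | zero => simp
  | succ n ih =>
    calc a ^ (n + 1) * b * (a ^ (n + 1))⁻¹ = a * (a ^ n * b * (a ^ n)⁻¹) * a⁻¹ := by group
      _ = b ^ k ^ (n + 1) := by rw [ih, ← conj_pow, h, ← pow_mul, pow_succ', mul_comm]

theorem isOfFinOrder_of_pow_eq_pow {x : G} {m n : ℕ} (hmn : m ≠ n) (h : x ^ m = x ^ n) :
    IsOfFinOrder x :=
  not_not.mp fun hx => hmn (injective_pow_iff_not_isOfFinOrder.mpr hx h)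

end

/-- In any group, if elements `a` and `b` satisfy `a b a⁻¹ = b²` and `b aʳ b⁻¹ = aˢ` for
natural numbers `r ≠ s`, then `b` has finite order. -/
theorem finite_order_of_conj_relations {G : Type*} [Group G] (a b : G) (r s : ℕ)
    (hrs : r ≠ s) (h1 : a * b * a⁻¹ = b ^ 2) (h2 : b * a ^ r * b⁻¹ = a ^ s) :
    IsOfFinOrder b := by
  have hconj := pow_mul_mul_inv_pow_of_mul_mul_inv_eq_pow h1
  have hpow : b ^ 2 ^ r = b ^ 2 ^ s :=
    calc b ^ 2 ^ r = b * (a ^ r * b * (a ^ r)⁻¹) * b⁻¹ := by rw [hconj]; group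
      _ = a ^ s * b * (a ^ s)⁻¹ := by rw [← h2]; group
      _ = b ^ 2 ^ s := hconj s
  exact isOfFinOrder_of_pow_eq_pow ((Nat.pow_right_injective le_rfl).ne hrs) hpow
end

section
/- Let n ≥ 3. All Nielsen transformations with respect to the fixed basis are conjugate in Aut(F_n): for any pairs of distinct indices (i, j) and (k, l), the left Nielsen move λ_{ij} is conjugate in Aut(F_n) to the left Nielsen move λ_{kl} and also to the right Nielsen move ρ_{kl}. -/
/-!
Relabelling the basis by a permutation `e` conjugates `λ_{ij}` to `λ_{e i, e j}`, and the
symmetric group is 2-transitive, so all left moves are conjugate. Inverting every basis element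
conjugates `λ_{kl}` to `ρ_{kl}`: `a_k ↦ a_k⁻¹ ↦ a_k⁻¹ a_l⁻¹ ↦ a_k a_l`.
-/

/-- The left Nielsen transformation `λ_{ij} ∈ Aut(F_n)`: the automorphism sending the
generator `a_i` to `a_j * a_i` and fixing all other generators. -/
def nielsen {n : ℕ} (i j : Fin n) (h : i ≠ j) : MulAut (FreeGroup (Fin n)) :=
  MonoidHom.toMulEquiv
    (FreeGroup.lift fun k => if k = i then FreeGroup.of j * FreeGroup.of i else FreeGroup.of k)
    (FreeGroup.lift fun k => if k = i then (FreeGroup.of j)⁻¹ * FreeGroup.of i else FreeGroup.of k)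
    (by ext k; by_cases hk : k = i <;> simp [hk, h.symm])
    (by ext k; by_cases hk : k = i <;> simp [hk, h.symm])

/-- The right Nielsen transformation `ρ_{ij} ∈ Aut(F_n)`: the automorphism sending the
generator `a_i` to `a_i * a_j` and fixing all other generators. -/
def rnielsen {n : ℕ} (i j : Fin n) (h : i ≠ j) : MulAut (FreeGroup (Fin n)) :=
  MonoidHom.toMulEquiv
    (FreeGroup.lift fun k => if k = i then FreeGroup.of i * FreeGroup.of j else FreeGroup.of k)
    (FreeGroup.lift fun k => if k = i then FreeGroup.of i * (FreeGroup.of j)⁻¹ else FreeGroup.of k)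
    (by ext k; by_cases hk : k = i <;> simp [hk, h.symm])
    (by ext k; by_cases hk : k = i <;> simp [hk, h.symm])

namespace FreeGroup

variable {α : Type*}

theorem mulAut_ext {f g : MulAut (FreeGroup α)} (h : ∀ x, f (of x) = g (of x)) : f = g :=
  MulEquiv.toMonoidHom_injective (ext_hom _ _ h)

def invGenerators : MulAut (FreeGroup α) :=
  MonoidHom.toMulEquiv (lift fun x => (of x)⁻¹) (lift fun x => (of x)⁻¹)
    (by ext x; simp) (by ext x; simp)

@[simp]
theorem invGenerators_of (x : α) : invGenerators (of x) = (of x)⁻¹ := by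
  simp [invGenerators, MonoidHom.toMulEquiv]

end FreeGroup

open FreeGroup

theorem Equiv.Perm.exists_apply_eq_and_apply_eq {α : Type*} {i j k l : α} (hij : i ≠ j)
    (hkl : k ≠ l) : ∃ e : Equiv.Perm α, e i = k ∧ e j = l :=
  MulAction.is_two_pretransitive_iff.mp (Equiv.Perm.isMultiplyPretransitive α 2) hij hkl

section Nielsen

variable {n : ℕ}

@[simp]
theorem nielsen_of (i j : Fin n) (h : i ≠ j) (x : Fin n) :
    nielsen i j h (of x) = if x = i then of j * of i else of x := by
  simp [nielsen, MonoidHom.toMulEquiv]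

@[simp]
theorem rnielsen_of (i j : Fin n) (h : i ≠ j) (x : Fin n) :
    rnielsen i j h (of x) = if x = i then of i * of j else of x := by
  simp [rnielsen, MonoidHom.toMulEquiv]

theorem semiconjBy_freeGroupCongr_nielsen (e : Equiv.Perm (Fin n)) (i j : Fin n) (h : i ≠ j) :
    SemiconjBy (freeGroupCongr e) (nielsen i j h) (nielsen (e i) (e j) (e.injective.ne h)) := by
  refine mulAut_ext fun x => ?_
  by_cases hx : x = i <;> simp [hx]

theorem semiconjBy_invGenerators_nielsen (i j : Fin n) (h : i ≠ j) :
    SemiconjBy invGenerators (nielsen i j h) (rnielsen i j h) := by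
  refine mulAut_ext fun x => ?_
  by_cases hx : x = i <;> simp [hx]

theorem isConj_nielsen (i j k l : Fin n) (hij : i ≠ j) (hkl : k ≠ l) :
    IsConj (nielsen i j hij) (nielsen k l hkl) := by
  obtain ⟨e, rfl, rfl⟩ := Equiv.Perm.exists_apply_eq_and_apply_eq hij hkl
  exact ⟨toUnits (freeGroupCongr e), semiconjBy_freeGroupCongr_nielsen e i j hij⟩

theorem isConj_nielsen_rnielsen (i j : Fin n) (h : i ≠ j) :
    IsConj (nielsen i j h) (rnielsen i j h) :=
  ⟨toUnits invGenerators, semiconjBy_invGenerators_nielsen i j h⟩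

end Nielsen

theorem nielsen_moves_conjugate_general (n : ℕ)
    (i j k l : Fin n) (hij : i ≠ j) (hkl : k ≠ l) :
    IsConj (nielsen i j hij) (nielsen k l hkl) ∧
    IsConj (nielsen i j hij) (rnielsen k l hkl) :=
  ⟨isConj_nielsen i j k l hij hkl,
    (isConj_nielsen i j k l hij hkl).trans (isConj_nielsen_rnielsen k l hkl)⟩

/-- All Nielsen transformations with respect to the fixed basis are conjugate in `Aut(F_n)`
(`n ≥ 3`): each left Nielsen move `λ_{ij}` is conjugate to each left Nielsen move `λ_{kl}`
and to each right Nielsen move `ρ_{kl}`. -/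
theorem nielsen_moves_conjugate (n : ℕ) (hn : 3 ≤ n)
    (i j k l : Fin n) (hij : i ≠ j) (hkl : k ≠ l) :
    IsConj (nielsen i j hij) (nielsen k l hkl) ∧
    IsConj (nielsen i j hij) (rnielsen k l hkl) :=
  nielsen_moves_conjugate_general n i j k l hij hkl
end
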